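/- arXiv:1708.08420 — 8 statements merged into one kernel-verified Lean document; each statement's English description precedes it below -/
import Mathlib

section
/- Let f be a nonzero homogeneous polynomial of degree d in ℂ[x_0,…,x_{n+1}], let l_1,…,l_k be nonzero linear forms, let t_1,…,t_k ≥ 0 be rational numbers, let I ⊆ {1,…,k}, and let s_0 be a positive integer such that s_0·t_i ∈ ℤ for every i ∈ I. Then the tuple (f, l_1,…,l_k) is (t_1,…,t_k)-semistable (respectively (t_1,…,t_k)-stable) if and only if the tuple (f^{s_0}·Π_{i∈I} l_i^{s_0 t_i}, (l_j)_{j∉I}) is ((s_0 t_j)_{j∉I})-semistable (respectively stable). -/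
open MvPolynomial

/-- The Hilbert–Mumford function `μ(f, r)`: the minimum over all monomials
`x_0^{d_0} ⋯ x_{m-1}^{d_{m-1}}` occurring in `f` of `∑ i, d_i * r_i`.
(Junk value `0` if the support is empty.) -/
noncomputable def mu {m : ℕ} (f : MvPolynomial (Fin m) ℂ) (r : Fin m → ℤ) : ℤ :=
  if h : f.support.Nonempty then
    f.support.inf' h (fun D => ∑ i, (D i : ℤ) * r i)
  else 0

/-- A weight vector `r` is normalized if `r ≠ 0`, `r_0 ≥ r_1 ≥ ⋯ ≥ r_{m-1}` and `∑ r_i = 0`. -/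
def Normalized {m : ℕ} (r : Fin m → ℤ) : Prop :=
  r ≠ 0 ∧ (∀ i j : Fin m, i ≤ j → r j ≤ r i) ∧ ∑ i, r i = 0

/-- The action of a matrix on polynomials by linear substitution of the variables. -/
noncomputable def act {m : ℕ} (g : Matrix (Fin m) (Fin m) ℂ)
    (f : MvPolynomial (Fin m) ℂ) : MvPolynomial (Fin m) ℂ :=
  aeval (fun i => ∑ j, C (g i j) * X j) f

/-- `(f, l)` is `t`-semistable if `μ(g·f, r) + ∑ i, t i · μ(g·l_i, r) ≤ 0` for every
`g ∈ SL(m, ℂ)` and every normalized weight vector `r`. -/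
def SemiStable {m : ℕ} {ι : Type} [Fintype ι] (t : ι → ℚ)
    (f : MvPolynomial (Fin m) ℂ) (l : ι → MvPolynomial (Fin m) ℂ) : Prop :=
  ∀ g : Matrix.SpecialLinearGroup (Fin m) ℂ, ∀ r : Fin m → ℤ, Normalized r →
    (mu (act (g : Matrix (Fin m) (Fin m) ℂ) f) r : ℚ)
      + ∑ i, t i * (mu (act (g : Matrix (Fin m) (Fin m) ℂ) (l i)) r : ℚ) ≤ 0

/-- `(f, l)` is `t`-stable if the strict inequality holds for all `g` and normalized `r`. -/
def Stable {m : ℕ} {ι : Type} [Fintype ι] (t : ι → ℚ)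
    (f : MvPolynomial (Fin m) ℂ) (l : ι → MvPolynomial (Fin m) ℂ) : Prop :=
  ∀ g : Matrix.SpecialLinearGroup (Fin m) ℂ, ∀ r : Fin m → ℤ, Normalized r →
    (mu (act (g : Matrix (Fin m) (Fin m) ℂ) f) r : ℚ)
      + ∑ i, t i * (mu (act (g : Matrix (Fin m) (Fin m) ℂ) (l i)) r : ℚ) < 0

lemma weight_eq_sum {m : ℕ} (r : Fin m → ℤ) (D : Fin m →₀ ℕ) :
    (Finsupp.weight r) D = ∑ i, (D i : ℤ) * r i := by
  rw [Finsupp.weight_apply, Finsupp.sum, Finset.sum_subset (Finset.subset_univ D.support)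
    (fun i _ hi => by simp [Finsupp.notMem_support_iff.mp hi])]
  exact Finset.sum_congr rfl fun i _ => by simp [mul_comm]

lemma mu_le {m : ℕ} {f : MvPolynomial (Fin m) ℂ} {D : Fin m →₀ ℕ} (hD : D ∈ f.support)
    (r : Fin m → ℤ) : mu f r ≤ ∑ i, (D i : ℤ) * r i := by
  rw [mu, dif_pos ⟨D, hD⟩]; exact Finset.inf'_le _ hD

lemma exists_mu {m : ℕ} {f : MvPolynomial (Fin m) ℂ} (hf : f ≠ 0) (r : Fin m → ℤ) :
    ∃ D ∈ f.support, (∑ i, (D i : ℤ) * r i) = mu f r := by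
  have h : f.support.Nonempty := MvPolynomial.support_nonempty.mpr hf
  rw [mu, dif_pos h]
  obtain ⟨D, hD, hE⟩ := Finset.exists_mem_eq_inf' h (fun D => ∑ i, (D i : ℤ) * r i)
  exact ⟨D, hD, hE.symm⟩

lemma mu_mul {m : ℕ} {p q : MvPolynomial (Fin m) ℂ} (hp : p ≠ 0) (hq : q ≠ 0) (r : Fin m → ℤ) :
    mu (p * q) r = mu p r + mu q r := by
  classical
  obtain ⟨a, ha, hwa⟩ := exists_mu hp r
  obtain ⟨b, hb, hwb⟩ := exists_mu hq r
  set p₀ := weightedHomogeneousComponent r (mu p r) p with hp₀def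
  set q₀ := weightedHomogeneousComponent r (mu q r) q with hq₀def
  have hp₀ : p₀ ≠ 0 := by
    intro h0
    have h1 : coeff a p₀ = coeff a p := by
      rw [hp₀def, coeff_weightedHomogeneousComponent, if_pos (by rw [weight_eq_sum]; exact hwa)]
    rw [h0, coeff_zero] at h1
    exact MvPolynomial.mem_support_iff.mp ha h1.symm
  have hq₀ : q₀ ≠ 0 := by
    intro h0
    have h1 : coeff b q₀ = coeff b q := by
      rw [hq₀def, coeff_weightedHomogeneousComponent, if_pos (by rw [weight_eq_sum]; exact hwb)]
    rw [h0, coeff_zero] at h1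
    exact MvPolynomial.mem_support_iff.mp hb h1.symm
  have hWH : (p₀ * q₀).IsWeightedHomogeneous r (mu p r + mu q r) :=
    (weightedHomogeneousComponent_isWeightedHomogeneous _ p).mul
      (weightedHomogeneousComponent_isWeightedHomogeneous _ q)
  obtain ⟨D, hD⟩ := MvPolynomial.support_nonempty.mpr (mul_ne_zero hp₀ hq₀)
  have hwD : (Finsupp.weight r) D = mu p r + mu q r := hWH (MvPolynomial.mem_support_iff.mp hD)
  have hco : coeff D (p * q) = coeff D (p₀ * q₀) := by
    rw [coeff_mul, coeff_mul]
    refine Finset.sum_congr rfl fun x hx => ?_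
    rw [Finset.HasAntidiagonal.mem_antidiagonal] at hx
    by_cases h1 : coeff x.1 p = 0
    · simp [hp₀def, coeff_weightedHomogeneousComponent, h1]
    by_cases h2 : coeff x.2 q = 0
    · simp [hq₀def, coeff_weightedHomogeneousComponent, h2]
    have hw1 : mu p r ≤ (Finsupp.weight r) x.1 := by
      rw [weight_eq_sum]; exact mu_le (MvPolynomial.mem_support_iff.mpr h1) r
    have hw2 : mu q r ≤ (Finsupp.weight r) x.2 := by
      rw [weight_eq_sum]; exact mu_le (MvPolynomial.mem_support_iff.mpr h2) r
    have hsum : (Finsupp.weight r) x.1 + (Finsupp.weight r) x.2 = mu p r + mu q r := by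
      rw [← map_add, hx, hwD]
    rw [hp₀def, hq₀def, coeff_weightedHomogeneousComponent, coeff_weightedHomogeneousComponent,
      if_pos (by omega), if_pos (by omega)]
  have hDpq : D ∈ (p * q).support := by
    rw [MvPolynomial.mem_support_iff, hco]
    exact MvPolynomial.mem_support_iff.mp hD
  apply le_antisymm
  · calc mu (p * q) r ≤ ∑ i, (D i : ℤ) * r i := mu_le hDpq r
      _ = mu p r + mu q r := by rw [← weight_eq_sum, hwD]
  · obtain ⟨E, hE, hwE⟩ := exists_mu (mul_ne_zero hp hq) r
    rw [← hwE]
    have hmem := MvPolynomial.support_mul p q hE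
    obtain ⟨a', ha', b', hb', rfl⟩ := Finset.mem_add.mp hmem
    rw [← weight_eq_sum, map_add, weight_eq_sum, weight_eq_sum]
    exact add_le_add (mu_le ha' r) (mu_le hb' r)

lemma mu_one {m : ℕ} (r : Fin m → ℤ) : mu (1 : MvPolynomial (Fin m) ℂ) r = 0 := by
  have h : (1 : MvPolynomial (Fin m) ℂ).support = {0} := by
    classical rw [← C_1, C_apply, support_monomial, if_neg one_ne_zero]
  rw [mu, dif_pos (by rw [h]; exact ⟨0, Finset.mem_singleton_self 0⟩)]
  simp [h]

lemma mu_pow {m : ℕ} {p : MvPolynomial (Fin m) ℂ} (hp : p ≠ 0) (n : ℕ) (r : Fin m → ℤ) :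
    mu (p ^ n) r = n * mu p r := by
  induction n with
  | zero => simp [mu_one]
  | succ n ih =>
    rw [pow_succ, mu_mul (pow_ne_zero n hp) hp r, ih]
    push_cast; ring

lemma mu_prod {m : ℕ} {ι : Type*} (s : Finset ι) (L : ι → MvPolynomial (Fin m) ℂ)
    (hL : ∀ i ∈ s, L i ≠ 0) (r : Fin m → ℤ) :
    mu (∏ i ∈ s, L i) r = ∑ i ∈ s, mu (L i) r := by
  classical
  induction s using Finset.cons_induction with
  | empty => simp [mu_one]
  | cons i s hi ih =>
    rw [Finset.prod_cons, Finset.sum_cons,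
      mu_mul (hL i (Finset.mem_cons_self i s))
        (Finset.prod_ne_zero_iff.mpr fun j hj => hL j (Finset.mem_cons_of_mem hj)) r,
      ih fun j hj => hL j (Finset.mem_cons_of_mem hj)]

lemma act_act {m : ℕ} (g g' : Matrix (Fin m) (Fin m) ℂ) (f : MvPolynomial (Fin m) ℂ) :
    act g (act g' f) = act (g' * g) f := by
  unfold act
  rw [show (aeval fun i => ∑ j, C (g i j) * X j) ((aeval fun i => ∑ j, C (g' i j) * X j) f)
      = ((aeval fun i => ∑ j, C (g i j) * X j).comp
          (aeval fun i => ∑ j, C (g' i j) * X j) : MvPolynomial (Fin m) ℂ →ₐ[ℂ] _) f from rfl]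
  refine DFunLike.congr_fun ?_ f
  apply MvPolynomial.algHom_ext
  intro i
  simp only [AlgHom.comp_apply, aeval_X, map_sum, map_mul, aeval_C, algebraMap_eq,
    Matrix.mul_apply, Finset.mul_sum]
  rw [Finset.sum_comm]
  refine Finset.sum_congr rfl fun k _ => ?_
  rw [Finset.sum_mul]
  exact Finset.sum_congr rfl fun j _ => (mul_assoc _ _ _).symm

lemma act_one {m : ℕ} (f : MvPolynomial (Fin m) ℂ) : act 1 f = f := by
  unfold act
  have : (fun i : Fin m => ∑ j, C ((1 : Matrix (Fin m) (Fin m) ℂ) i j) * X j) = X := by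
    funext i
    simp [Matrix.one_apply, ite_smul, Finset.sum_ite_eq]
  rw [this, aeval_X_left_apply]

lemma act_ne_zero {m : ℕ} (g : Matrix.SpecialLinearGroup (Fin m) ℂ)
    {f : MvPolynomial (Fin m) ℂ} (hf : f ≠ 0) :
    act (g : Matrix (Fin m) (Fin m) ℂ) f ≠ 0 := by
  intro h0
  apply hf
  have h := act_act ((g⁻¹ : Matrix.SpecialLinearGroup (Fin m) ℂ) : Matrix (Fin m) (Fin m) ℂ)
    (g : Matrix (Fin m) (Fin m) ℂ) f
  rw [h0] at h
  rw [← Matrix.SpecialLinearGroup.coe_mul, mul_inv_cancel, Matrix.SpecialLinearGroup.coe_one,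
    act_one] at h
  rw [← h]
  unfold act
  exact map_zero _

/-- Lemma 2.6 of the paper: `(f, l_1, …, l_k)` is `t`-(semi)stable if and only if
`(f^{s₀} · ∏_{i ∈ I} l_i^{s₀ t_i}, (l_j)_{j ∉ I})` is `((s₀ t_j)_{j ∉ I})`-(semi)stable,
where `s₀` is a positive integer with `s₀ t_i ∈ ℤ` for all `i ∈ I` (the natural number
`e i` records `s₀ t_i`). -/
theorem semistable_tuple_iff {n k d : ℕ}
    (f : MvPolynomial (Fin (n + 2)) ℂ) (hf : f ≠ 0) (hfh : f.IsHomogeneous d)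
    (l : Fin k → MvPolynomial (Fin (n + 2)) ℂ)
    (hl : ∀ i, l i ≠ 0) (hlh : ∀ i, (l i).IsHomogeneous 1)
    (t : Fin k → ℚ) (ht : ∀ i, 0 ≤ t i)
    (I : Finset (Fin k)) (s₀ : ℕ) (hs₀ : 0 < s₀)
    (e : Fin k → ℕ) (he : ∀ i ∈ I, (e i : ℚ) = (s₀ : ℚ) * t i) :
    (SemiStable t f l ↔
      SemiStable (fun j : {j : Fin k // j ∉ I} => (s₀ : ℚ) * t j)
        (f ^ s₀ * ∏ i ∈ I, l i ^ e i) (fun j : {j : Fin k // j ∉ I} => l j)) ∧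
    (Stable t f l ↔
      Stable (fun j : {j : Fin k // j ∉ I} => (s₀ : ℚ) * t j)
        (f ^ s₀ * ∏ i ∈ I, l i ^ e i) (fun j : {j : Fin k // j ∉ I} => l j)) := by
  classical
  have hs : (0 : ℚ) < (s₀ : ℚ) := by exact_mod_cast hs₀
  have key : ∀ (g : Matrix.SpecialLinearGroup (Fin (n + 2)) ℂ) (r : Fin (n + 2) → ℤ),
      ((mu (act (g : Matrix (Fin (n + 2)) (Fin (n + 2)) ℂ) (f ^ s₀ * ∏ i ∈ I, l i ^ e i)) r : ℚ)
        + ∑ j : {j : Fin k // j ∉ I}, ((s₀ : ℚ) * t j)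
            * (mu (act (g : Matrix (Fin (n + 2)) (Fin (n + 2)) ℂ) (l j)) r : ℚ))
      = (s₀ : ℚ) * ((mu (act (g : Matrix (Fin (n + 2)) (Fin (n + 2)) ℂ) f) r : ℚ)
        + ∑ i, t i * (mu (act (g : Matrix (Fin (n + 2)) (Fin (n + 2)) ℂ) (l i)) r : ℚ)) := by
    intro g r
    set G := (g : Matrix (Fin (n + 2)) (Fin (n + 2)) ℂ)
    have hact : act G (f ^ s₀ * ∏ i ∈ I, l i ^ e i)
        = (act G f) ^ s₀ * ∏ i ∈ I, (act G (l i)) ^ e i := by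
      unfold act
      rw [map_mul, map_pow, map_prod]
      simp [map_pow]
    have h1 : mu (act G (f ^ s₀ * ∏ i ∈ I, l i ^ e i)) r
        = (s₀ : ℤ) * mu (act G f) r + ∑ i ∈ I, (e i : ℤ) * mu (act G (l i)) r := by
      rw [hact, mu_mul (pow_ne_zero _ (act_ne_zero g hf))
        (Finset.prod_ne_zero_iff.mpr fun i _ => pow_ne_zero _ (act_ne_zero g (hl i))) r,
        mu_pow (act_ne_zero g hf),
        mu_prod I _ (fun i _ => pow_ne_zero _ (act_ne_zero g (hl i))) r]
      congr 1
      exact Finset.sum_congr rfl fun i _ => mu_pow (act_ne_zero g (hl i)) (e i) r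
    rw [h1]
    have hsub : (∑ j : {j : Fin k // j ∉ I}, ((s₀ : ℚ) * t j) * (mu (act G (l j)) r : ℚ))
        = ∑ j ∈ Iᶜ, ((s₀ : ℚ) * t j) * (mu (act G (l j)) r : ℚ) :=
      (Finset.sum_subtype Iᶜ (fun j => Finset.mem_compl)
        (fun j => ((s₀ : ℚ) * t j) * (mu (act G (l j)) r : ℚ))).symm
    rw [hsub, ← Finset.sum_add_sum_compl I (fun i => t i * (mu (act G (l i)) r : ℚ))]
    have hI : (((∑ i ∈ I, (e i : ℤ) * mu (act G (l i)) r : ℤ)) : ℚ)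
        = (s₀ : ℚ) * ∑ i ∈ I, t i * (mu (act G (l i)) r : ℚ) := by
      push_cast
      rw [Finset.mul_sum]
      exact Finset.sum_congr rfl fun i hi => by rw [he i hi]; ring
    push_cast
    push_cast at hI
    rw [hI, Finset.mul_sum, mul_add, mul_add, Finset.mul_sum, Finset.mul_sum]
    simp [mul_assoc, add_assoc]
  refine ⟨⟨fun h g r hr => ?_, fun h g r hr => ?_⟩, ⟨fun h g r hr => ?_, fun h g r hr => ?_⟩⟩
  · rw [key g r]
    exact mul_nonpos_of_nonneg_of_nonpos hs.le (h g r hr)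
  · have hh := h g r hr
    rw [key g r] at hh
    nlinarith [hh, hs]
  · rw [key g r]
    exact mul_neg_of_pos_of_neg hs (h g r hr)
  · have hh := h g r hr
    rw [key g r] at hh
    nlinarith [hh, hs]
end

section
/- Let G_M be the 10×10 integer Gram matrix of the lattice M, viewed as a ℤ-linear map ℤ^10 → ℤ^10, v ↦ G_M·v. The quotient abelian group ℤ^10 / G_M(ℤ^10) (the cokernel of this map, which is the discriminant group A_M = M*/M of the lattice M) is isomorphic to (ℤ/2ℤ)^6. -/
open Matrix

/-- The Gram matrix of the lattice `M = ℤ^10` with ordered basis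
`(γ, l₁', α₁, α₂, α₃, l₂', β₁, β₂, β₃, ξ)`. -/
def G_M : Matrix (Fin 10) (Fin 10) ℤ :=
  !![-2, 1, 0, 0, 0, 1, 0, 0, 0, 2;
     1, -2, 1, 1, 1, 0, 0, 0, 0, 0;
     0, 1, -2, 0, 0, 0, 0, 0, 0, 0;
     0, 1, 0, -2, 0, 0, 0, 0, 0, 0;
     0, 1, 0, 0, -2, 0, 0, 0, 0, 0;
     1, 0, 0, 0, 0, -2, 1, 1, 1, 0;
     0, 0, 0, 0, 0, 1, -2, 0, 0, 0;
     0, 0, 0, 0, 0, 1, 0, -2, 0, 0;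
     0, 0, 0, 0, 0, 1, 0, 0, -2, 0;
     2, 0, 0, 0, 0, 0, 0, 0, 0, 0]

def Pm : Matrix (Fin 10) (Fin 10) ℤ :=
  !![1, 0, 0, 0, 0, 0, 0, 0, 0, 0;
     -2, 1, 0, 0, 0, 0, 0, 0, 0, 0;
     1, -2, 3, 0, 1, 1, 0, 0, 0, 0;
     1, 0, -1, 0, 0, 0, 0, 0, 0, 0;
     1, 0, -1, 0, -1, 0, 0, 0, 0, 0;
     0, 0, -2, 1, 0, 0, 0, 0, 0, 0;
     0, 0, 1, -2, 0, -2, 1, 0, 0, 0;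
     0, 0, 1, 0, 0, 1, 0, -1, 0, 0;
     0, 0, 1, 0, 0, 1, 0, 0, -1, 0;
     0, 0, 0, 0, 0, 1, 1, -1, -1, -1]

def Pinvm : Matrix (Fin 10) (Fin 10) ℤ :=
  !![1, 0, 0, 0, 0, 0, 0, 0, 0, 0;
     2, 1, 0, 0, 0, 0, 0, 0, 0, 0;
     1, 0, 0, -1, 0, 0, 0, 0, 0, 0;
     2, 0, 0, -2, 0, 1, 0, 0, 0, 0;
     0, 0, 0, 1, -1, 0, 0, 0, 0, 0;
     0, 2, 1, 2, 1, 0, 0, 0, 0, 0;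
     3, 4, 2, 1, 2, 2, 1, 0, 0, 0;
     1, 2, 1, 1, 1, 0, 0, -1, 0, 0;
     1, 2, 1, 1, 1, 0, 0, 0, -1, 0;
     1, 2, 1, 1, 1, 2, 1, 1, 1, -1]

def Qinvm : Matrix (Fin 10) (Fin 10) ℤ :=
  !![0, 0, 0, 0, 0, 1, 1, -1, -1, -1;
     1, 0, -1, 0, 0, 0, 2, -2, -2, -2;
     0, 1, -2, 0, -1, -1, 1, -1, -1, -1;
     0, 0, 0, 0, 0, 0, 1, -1, -1, -1;
     0, 0, 0, 0, 1, 0, 1, -1, -1, -1;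
     0, 0, 1, 0, 0, 2, 0, 0, 0, -2;
     0, 0, 0, 1, 0, 3, -1, 0, 0, -1;
     0, 0, 0, 0, 0, 0, 0, 1, 0, -1;
     0, 0, 0, 0, 0, 0, 0, 0, 1, -1;
     0, 0, 0, 0, 0, 0, 0, 0, 0, 1]

def Qm : Matrix (Fin 10) (Fin 10) ℤ :=
  !![-2, 1, 0, 0, 0, 1, 0, 0, 0, 2;
     -3, 0, 1, 1, 1, 2, 0, 0, 0, 4;
     -2, 0, 0, 2, 0, 1, 0, 0, 0, 2;
     -3, 0, 0, 4, 0, 0, 1, 1, 1, 4;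
     0, 0, 0, -1, 1, 0, 0, 0, 0, 0;
     1, 0, 0, -1, 0, 0, 0, 0, 0, 0;
     0, 0, 0, 1, 0, 0, 0, 1, 1, 3;
     0, 0, 0, 0, 0, 0, 0, 1, 0, 1;
     0, 0, 0, 0, 0, 0, 0, 0, 1, 1;
     0, 0, 0, 0, 0, 0, 0, 0, 0, 1]

def dd : Fin 10 → ℤ := ![1, 1, 1, 1, 2, 2, 2, 2, 2, 2]

def emb (j : Fin 6) : Fin 10 := ⟨j.val + 4, by omega⟩

lemma hPPinv : Pm * Pinvm = 1 := by decide
lemma hPinvP : Pinvm * Pm = 1 := by decide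
lemma hPinvG : Pinvm * G_M = diagonal dd * Qm := by decide
lemma hGQinv : G_M * Qinvm = Pm * diagonal dd := by decide
lemma hdd : ∀ j : Fin 6, dd (emb j) = 2 := by decide
lemma hdd1 : ∀ i : Fin 10, i.val < 4 → dd i = 1 := by decide
lemma hdd2 : ∀ i : Fin 10, 4 ≤ i.val → dd i = 2 := by decide

/-- The map `v ↦ ((P⁻¹ v)_{j+4} mod 2)_{j<6}`. -/
def f : (Fin 10 → ℤ) →ₗ[ℤ] (Fin 6 → ZMod 2) where
  toFun v := fun j => ((Pinvm.mulVec v (emb j) : ℤ) : ZMod 2)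
  map_add' x y := by
    funext j
    simp [Matrix.mulVec_add]
  map_smul' c x := by
    funext j
    show ((Pinvm.mulVec (c • x) (emb j) : ℤ) : ZMod 2)
      = c • ((Pinvm.mulVec x (emb j) : ℤ) : ZMod 2)
    rw [Matrix.mulVec_smul, Pi.smul_apply, smul_eq_mul, zsmul_eq_mul]
    push_cast
    ring

lemma fsurj : Function.Surjective f := by
  intro y
  refine ⟨Pm.mulVec (fun i => if h : 4 ≤ i.val then ((y ⟨i.val - 4, by omega⟩).val : ℤ) else 0), ?_⟩
  funext j
  show ((Pinvm.mulVec (Pm.mulVec _) (emb j) : ℤ) : ZMod 2) = y j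
  rw [Matrix.mulVec_mulVec, hPinvP, Matrix.one_mulVec]
  have h4 : 4 ≤ (emb j).val := by simp [emb]
  rw [dif_pos h4]
  have : (⟨(emb j).val - 4, by omega⟩ : Fin 6) = j := by
    apply Fin.ext; simp [emb]
  rw [this]
  simp [ZMod.natCast_val, ZMod.cast_id]

lemma hker : LinearMap.ker f = LinearMap.range G_M.mulVecLin := by
  apply le_antisymm
  · intro v hv
    have hdvd : ∀ j : Fin 6, (2 : ℤ) ∣ Pinvm.mulVec v (emb j) := by
      intro j
      have := congrFun hv j
      exact (ZMod.intCast_zmod_eq_zero_iff_dvd _ 2).mp this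
    set u := Pinvm.mulVec v with hu
    set t : Fin 10 → ℤ := fun i => if 4 ≤ i.val then u i / 2 else u i with ht
    have hdvd' : ∀ i : Fin 10, 4 ≤ i.val → (2 : ℤ) ∣ u i := by
      intro i hi
      have he : emb ⟨i.val - 4, by omega⟩ = i := by
        apply Fin.ext; simp [emb]; omega
      simpa [he] using hdvd ⟨i.val - 4, by omega⟩
    have hDt : (diagonal dd).mulVec t = u := by
      funext i
      rw [Matrix.mulVec_diagonal]
      simp only [ht]
      by_cases h : 4 ≤ i.val
      · rw [if_pos h, hdd2 i h]
        exact Int.mul_ediv_cancel' (hdvd' i h)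
      · rw [if_neg h, hdd1 i (by omega), one_mul]
    refine ⟨Qinvm.mulVec t, ?_⟩
    show G_M.mulVec (Qinvm.mulVec t) = v
    rw [Matrix.mulVec_mulVec, hGQinv, ← Matrix.mulVec_mulVec, hDt, hu,
      Matrix.mulVec_mulVec, hPPinv, Matrix.one_mulVec]
  · rintro v ⟨w, rfl⟩
    show f (G_M.mulVec w) = 0
    funext j
    show ((Pinvm.mulVec (G_M.mulVec w) (emb j) : ℤ) : ZMod 2) = 0
    rw [Matrix.mulVec_mulVec, hPinvG, ← Matrix.mulVec_mulVec, Matrix.mulVec_diagonal, hdd]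
    exact (ZMod.intCast_zmod_eq_zero_iff_dvd _ 2).mpr ⟨_, rfl⟩

/-- Lemma 3.3 of the paper: the discriminant group `A_M = M*/M`, i.e. the cokernel
`ℤ^10 / G_M(ℤ^10)` of the map `v ↦ G_M · v`, is isomorphic to `(ℤ/2ℤ)^6`. -/
theorem discriminant_group_G_M :
    Nonempty (((Fin 10 → ℤ) ⧸ LinearMap.range G_M.mulVecLin) ≃+ (Fin 6 → ZMod 2)) := by
  exact ⟨((Submodule.quotEquivOfEq _ _ hker.symm).trans
    (f.quotKerEquivOfSurjective fsurj)).toAddEquiv⟩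
end

section
/- Let e_0,…,e_9 be the standard basis of ℚ^10 and let v_γ = G_M^{-1}e_0, v_{α1} = G_M^{-1}e_2, v_{α2} = G_M^{-1}e_3, v_{β1} = G_M^{-1}e_6, v_{β2} = G_M^{-1}e_7, v_ξ = G_M^{-1}e_9 (rational vectors representing the dual classes γ*, α_1*, α_2*, β_1*, β_2*, ξ* in M ⊗ ℚ). Then for all integers a, b, c, d, e, f, setting u = a·v_γ + b·v_{α1} + c·v_{α2} + d·v_{β1} + e·v_{β2} + f·v_ξ, the rational number uᵀ G_M u − (b² + c² + bc + d² + e² + de + (a+b+c+d+e)f − f²/2) lies in 2ℤ. -/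
open Matrix

/-- The Gram matrix of the lattice `M`, with rational entries. -/
def G_MQ : Matrix (Fin 10) (Fin 10) ℚ :=
  !![-2, 1, 0, 0, 0, 1, 0, 0, 0, 2;
     1, -2, 1, 1, 1, 0, 0, 0, 0, 0;
     0, 1, -2, 0, 0, 0, 0, 0, 0, 0;
     0, 1, 0, -2, 0, 0, 0, 0, 0, 0;
     0, 1, 0, 0, -2, 0, 0, 0, 0, 0;
     1, 0, 0, 0, 0, -2, 1, 1, 1, 0;
     0, 0, 0, 0, 0, 1, -2, 0, 0, 0;
     0, 0, 0, 0, 0, 1, 0, -2, 0, 0;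
     0, 0, 0, 0, 0, 1, 0, 0, -2, 0;
     2, 0, 0, 0, 0, 0, 0, 0, 0, 0]

/-- The rational vector representing the dual basis element attached to the `i`-th
basis vector: the `i`-th column of `G_M⁻¹`. -/
noncomputable def dualVec (i : Fin 10) : Fin 10 → ℚ :=
  G_MQ⁻¹ *ᵥ Pi.single i 1


def B_M : Matrix (Fin 10) (Fin 10) ℚ :=
  !![0, 0, 0, 0, 0, 0, 0, 0, 0, 1/2;
     0, -2, -1, -1, -1, 0, 0, 0, 0, 1;
     0, -1, -1, -1/2, -1/2, 0, 0, 0, 0, 1/2;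
     0, -1, -1/2, -1, -1/2, 0, 0, 0, 0, 1/2;
     0, -1, -1/2, -1/2, -1, 0, 0, 0, 0, 1/2;
     0, 0, 0, 0, 0, -2, -1, -1, -1, 1;
     0, 0, 0, 0, 0, -1, -1, -1/2, -1/2, 1/2;
     0, 0, 0, 0, 0, -1, -1/2, -1, -1/2, 1/2;
     0, 0, 0, 0, 0, -1, -1/2, -1/2, -1, 1/2;
     1/2, 1, 1/2, 1/2, 1/2, 1, 1/2, 1/2, 1/2, -1/2]

lemma one_fin_ten : (1 : Matrix (Fin 10) (Fin 10) ℚ) =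
    !![1, 0, 0, 0, 0, 0, 0, 0, 0, 0;
     0, 1, 0, 0, 0, 0, 0, 0, 0, 0;
     0, 0, 1, 0, 0, 0, 0, 0, 0, 0;
     0, 0, 0, 1, 0, 0, 0, 0, 0, 0;
     0, 0, 0, 0, 1, 0, 0, 0, 0, 0;
     0, 0, 0, 0, 0, 1, 0, 0, 0, 0;
     0, 0, 0, 0, 0, 0, 1, 0, 0, 0;
     0, 0, 0, 0, 0, 0, 0, 1, 0, 0;
     0, 0, 0, 0, 0, 0, 0, 0, 1, 0;
     0, 0, 0, 0, 0, 0, 0, 0, 0, 1] := by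
  ext i j
  fin_cases i <;> fin_cases j <;> rfl

lemma G_MQ_mul_B : G_MQ * B_M = 1 := by
  rw [one_fin_ten]
  norm_num [G_MQ, B_M]

lemma G_MQ_inv : G_MQ⁻¹ = B_M := inv_eq_right_inv G_MQ_mul_B

lemma dualVec_eq (i : Fin 10) : dualVec i = fun j => B_M j i := by
  funext j
  simp [dualVec, G_MQ_inv, Matrix.mulVec_single]

lemma G_mulVec_dualVec (i : Fin 10) : G_MQ *ᵥ dualVec i = Pi.single i 1 := by
  rw [dualVec, G_MQ_inv, Matrix.mulVec_mulVec, G_MQ_mul_B, Matrix.one_mulVec]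

/-- Remark 3.4 of the paper: the discriminant quadratic form of `M` evaluated on
`a·γ* + b·α₁* + c·α₂* + d·β₁* + e·β₂* + f·ξ*` equals
`b² + c² + bc + d² + e² + de + (a+b+c+d+e)f − f²/2` modulo `2ℤ`, where
`γ* = G_M⁻¹e₀`, `α₁* = G_M⁻¹e₂`, `α₂* = G_M⁻¹e₃`, `β₁* = G_M⁻¹e₆`,
`β₂* = G_M⁻¹e₇`, `ξ* = G_M⁻¹e₉`. -/
theorem q_M_formula (a b c d e f : ℤ) :
    ∃ m : ℤ,
      (((a : ℚ) • dualVec 0 + (b : ℚ) • dualVec 2 + (c : ℚ) • dualVec 3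
          + (d : ℚ) • dualVec 6 + (e : ℚ) • dualVec 7 + (f : ℚ) • dualVec 9) ⬝ᵥ
        (G_MQ *ᵥ ((a : ℚ) • dualVec 0 + (b : ℚ) • dualVec 2 + (c : ℚ) • dualVec 3
          + (d : ℚ) • dualVec 6 + (e : ℚ) • dualVec 7 + (f : ℚ) • dualVec 9)))
      - ((b : ℚ) ^ 2 + (c : ℚ) ^ 2 + (b : ℚ) * (c : ℚ)
          + (d : ℚ) ^ 2 + (e : ℚ) ^ 2 + (d : ℚ) * (e : ℚ)
          + ((a : ℚ) + (b : ℚ) + (c : ℚ) + (d : ℚ) + (e : ℚ)) * (f : ℚ)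
          - (f : ℚ) ^ 2 / 2)
      = 2 * (m : ℚ) := by
  refine ⟨-(b^2 + b*c + c^2 + d^2 + d*e + e^2), ?_⟩
  set u : Fin 10 → ℚ := (a : ℚ) • dualVec 0 + (b : ℚ) • dualVec 2 + (c : ℚ) • dualVec 3
      + (d : ℚ) • dualVec 6 + (e : ℚ) • dualVec 7 + (f : ℚ) • dualVec 9 with hu
  have hG : G_MQ *ᵥ u = (a : ℚ) • (Pi.single 0 1 : Fin 10 → ℚ)
      + (b : ℚ) • (Pi.single 2 1 : Fin 10 → ℚ)
      + (c : ℚ) • (Pi.single 3 1 : Fin 10 → ℚ) + (d : ℚ) • (Pi.single 6 1 : Fin 10 → ℚ)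
      + (e : ℚ) • (Pi.single 7 1 : Fin 10 → ℚ)
      + (f : ℚ) • (Pi.single 9 1 : Fin 10 → ℚ) := by
    simp [hu, Matrix.mulVec_add, Matrix.mulVec_smul, G_mulVec_dualVec]
  have hdot : u ⬝ᵥ (G_MQ *ᵥ u)
      = a * u 0 + b * u 2 + c * u 3 + d * u 6 + e * u 7 + f * u 9 := by
    rw [hG]
    simp only [dotProduct_add, dotProduct_smul, dotProduct_single,
      smul_eq_mul, mul_one]
  rw [hdot]
  have hval : ∀ j : Fin 10, u j = a * B_M j 0 + b * B_M j 2 + c * B_M j 3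
      + d * B_M j 6 + e * B_M j 7 + f * B_M j 9 := by
    intro j
    simp [hu, dualVec_eq]
  rw [hval, hval, hval, hval, hval, hval]
  simp only [show B_M 0 0 = 0 from rfl,
    show B_M 0 2 = 0 from rfl,
    show B_M 0 3 = 0 from rfl,
    show B_M 0 6 = 0 from rfl,
    show B_M 0 7 = 0 from rfl,
    show B_M 0 9 = (1/2 : ℚ) from rfl,
    show B_M 2 0 = 0 from rfl,
    show B_M 2 2 = -1 from rfl,
    show B_M 2 3 = (-1/2 : ℚ) from rfl,
    show B_M 2 6 = 0 from rfl,
    show B_M 2 7 = 0 from rfl,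
    show B_M 2 9 = (1/2 : ℚ) from rfl,
    show B_M 3 0 = 0 from rfl,
    show B_M 3 2 = (-1/2 : ℚ) from rfl,
    show B_M 3 3 = -1 from rfl,
    show B_M 3 6 = 0 from rfl,
    show B_M 3 7 = 0 from rfl,
    show B_M 3 9 = (1/2 : ℚ) from rfl,
    show B_M 6 0 = 0 from rfl,
    show B_M 6 2 = 0 from rfl,
    show B_M 6 3 = 0 from rfl,
    show B_M 6 6 = -1 from rfl,
    show B_M 6 7 = (-1/2 : ℚ) from rfl,
    show B_M 6 9 = (1/2 : ℚ) from rfl,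
    show B_M 7 0 = 0 from rfl,
    show B_M 7 2 = 0 from rfl,
    show B_M 7 3 = 0 from rfl,
    show B_M 7 6 = (-1/2 : ℚ) from rfl,
    show B_M 7 7 = -1 from rfl,
    show B_M 7 9 = (1/2 : ℚ) from rfl,
    show B_M 9 0 = (1/2 : ℚ) from rfl,
    show B_M 9 2 = (1/2 : ℚ) from rfl,
    show B_M 9 3 = (1/2 : ℚ) from rfl,
    show B_M 9 6 = (1/2 : ℚ) from rfl,
    show B_M 9 7 = (1/2 : ℚ) from rfl,
    show B_M 9 9 = (-1/2 : ℚ) from rfl]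
  push_cast
  ring
end

section
/- There exists an invertible 10×10 real matrix P such that Pᵀ G_M P is the diagonal matrix diag(1, −1, −1, −1, −1, −1, −1, −1, −1, −1); that is, the symmetric integer matrix G_M has signature (1,9). -/
open Matrix

/-- A congruence matrix over `ℤ`. -/
def Lz : Matrix (Fin 10) (Fin 10) ℤ :=
  !![4, 1, 1, 1, 1, 2, -1, -1, -1, -1;
     6, 0, 2, 2, 2, 2, -2, -2, -2, -2;
     3, 0, 0, 3, 1, 1, -1, -1, -1, -1;
     3, 0, 0, 0, 2, 1, -1, -1, -1, -1;
     2, 0, 0, 0, 0, 0, -1, -1, -1, -1;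
     2, 0, 0, 0, 0, 2, 0, 0, 0, -2;
     0, 0, 0, 0, 0, 0, 1, 0, 0, -1;
     0, 0, 0, 0, 0, 0, 0, 1, 0, -1;
     0, 0, 0, 0, 0, 0, 0, 0, 1, -1;
     0, 0, 0, 0, 0, 0, 0, 0, 0, 1]

/-- The diagonal obtained from `Lz` by congruence. -/
def dz : Fin 10 → ℤ := ![4, -2, -6, -12, -4, -4, -2, -2, -2, -2]

lemma Lz_congr : Lzᵀ * G_M * Lz = Matrix.diagonal dz := by decide

lemma sqrt_abs_inv_mul (d : ℝ) :
    Real.sqrt |d|⁻¹ * d * Real.sqrt |d|⁻¹ = d / |d| := by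
  rw [mul_comm, ← mul_assoc, Real.mul_self_sqrt (inv_nonneg.mpr (abs_nonneg d))]
  rw [inv_mul_eq_div]

set_option maxRecDepth 4000 in
/-- The symmetric matrix `G_M` has signature `(1, 9)`: there is an invertible real
matrix `P` with `Pᵀ G_M P = diag(1, −1, −1, −1, −1, −1, −1, −1, −1, −1)`. -/
theorem signature_G_M :
    ∃ P : Matrix (Fin 10) (Fin 10) ℝ, IsUnit P.det ∧
      Pᵀ * (G_M.map (Int.cast : ℤ → ℝ)) * P =
        Matrix.diagonal ![1, -1, -1, -1, -1, -1, -1, -1, -1, -1] := by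
  set dR : Fin 10 → ℝ := fun i => ((dz i : ℤ) : ℝ) with hdR
  set s : Fin 10 → ℝ := fun i => Real.sqrt |dR i|⁻¹ with hs
  set P : Matrix (Fin 10) (Fin 10) ℝ :=
    Lz.map (Int.cast : ℤ → ℝ) * Matrix.diagonal s with hP
  have hcongr : (Lz.map (Int.cast : ℤ → ℝ))ᵀ * G_M.map (Int.cast : ℤ → ℝ) *
      Lz.map (Int.cast : ℤ → ℝ) = Matrix.diagonal dR := by
    have := congrArg (Matrix.map · ((Int.castRingHom ℝ) : ℤ →+* ℝ)) Lz_congr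
    simp only [Matrix.map_mul, Matrix.transpose_map, Matrix.diagonal_map,
      map_zero] at this
    simpa using this
  have hmain : Pᵀ * (G_M.map (Int.cast : ℤ → ℝ)) * P =
      Matrix.diagonal ![1, -1, -1, -1, -1, -1, -1, -1, -1, -1] := by
    rw [hP, Matrix.transpose_mul, Matrix.diagonal_transpose]
    calc Matrix.diagonal s * (Lz.map (Int.cast : ℤ → ℝ))ᵀ *
          G_M.map (Int.cast : ℤ → ℝ) * (Lz.map (Int.cast : ℤ → ℝ) * Matrix.diagonal s)
        = Matrix.diagonal s * ((Lz.map (Int.cast : ℤ → ℝ))ᵀ *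
            G_M.map (Int.cast : ℤ → ℝ) * Lz.map (Int.cast : ℤ → ℝ)) *
            Matrix.diagonal s := by simp only [mul_assoc]
      _ = Matrix.diagonal s * Matrix.diagonal dR * Matrix.diagonal s := by rw [hcongr]
      _ = Matrix.diagonal (fun i => s i * dR i * s i) := by
          rw [Matrix.diagonal_mul_diagonal, Matrix.diagonal_mul_diagonal]
      _ = Matrix.diagonal ![1, -1, -1, -1, -1, -1, -1, -1, -1, -1] := by
          have hfun : (fun i => s i * dR i * s i) =
              ![1, -1, -1, -1, -1, -1, -1, -1, -1, -1] := by
            funext i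
            rw [hs]
            simp only [sqrt_abs_inv_mul]
            fin_cases i <;> norm_num [hdR, dz]
          rw [hfun]
  clear_value P
  refine ⟨P, ?_, hmain⟩
  set v : Fin 10 → ℝ := ![1, -1, -1, -1, -1, -1, -1, -1, -1, -1] with hv
  have hDD : Matrix.diagonal v * Matrix.diagonal v = 1 := by
    rw [Matrix.diagonal_mul_diagonal]
    have : (fun i => v i * v i) = fun _ => (1 : ℝ) := by
      funext i; rw [hv]; fin_cases i <;> norm_num
    rw [this, Matrix.diagonal_one]
  have hleft : (Matrix.diagonal v * Pᵀ * G_M.map (Int.cast : ℤ → ℝ)) * P = 1 := by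
    calc (Matrix.diagonal v * Pᵀ * G_M.map (Int.cast : ℤ → ℝ)) * P
        = Matrix.diagonal v * (Pᵀ * G_M.map (Int.cast : ℤ → ℝ) * P) := by
          simp only [mul_assoc]
      _ = Matrix.diagonal v * Matrix.diagonal v := by rw [hmain]
      _ = 1 := hDD
  exact Matrix.isUnit_det_of_left_inverse hleft
end

section
/- The 12×12 block diagonal Gram matrices of U ⊥ U(2) ⊥ A_1² ⊥ D_6 and of U ⊥ U ⊥ A_1⁴ ⊥ D_4 are isometric: there exists a 12×12 integer matrix P with det P = ±1 such that Pᵀ A P = B, where A is the Gram matrix of U ⊥ U(2) ⊥ A_1 ⊥ A_1 ⊥ D_6 and B is the Gram matrix of U ⊥ U ⊥ A_1 ⊥ A_1 ⊥ A_1 ⊥ A_1 ⊥ D_4. -/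
open Matrix

/-- The block diagonal Gram matrix of `U ⊥ U(2) ⊥ A₁ ⊥ A₁ ⊥ D₆` (root lattices
negative definite; `D₆` is the negative of the Cartan matrix of type `D₆`). -/
def gramUU2A1A1D6 : Matrix (Fin 12) (Fin 12) ℤ :=
  !![0, 1, 0, 0, 0, 0, 0, 0, 0, 0, 0, 0;
     1, 0, 0, 0, 0, 0, 0, 0, 0, 0, 0, 0;
     0, 0, 0, 2, 0, 0, 0, 0, 0, 0, 0, 0;
     0, 0, 2, 0, 0, 0, 0, 0, 0, 0, 0, 0;
     0, 0, 0, 0, -2, 0, 0, 0, 0, 0, 0, 0;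
     0, 0, 0, 0, 0, -2, 0, 0, 0, 0, 0, 0;
     0, 0, 0, 0, 0, 0, -2, 1, 0, 0, 0, 0;
     0, 0, 0, 0, 0, 0, 1, -2, 1, 0, 0, 0;
     0, 0, 0, 0, 0, 0, 0, 1, -2, 1, 0, 0;
     0, 0, 0, 0, 0, 0, 0, 0, 1, -2, 1, 1;
     0, 0, 0, 0, 0, 0, 0, 0, 0, 1, -2, 0;
     0, 0, 0, 0, 0, 0, 0, 0, 0, 1, 0, -2]

/-- The block diagonal Gram matrix of `U ⊥ U ⊥ A₁ ⊥ A₁ ⊥ A₁ ⊥ A₁ ⊥ D₄`. -/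
def gramUUA1A1A1A1D4 : Matrix (Fin 12) (Fin 12) ℤ :=
  !![0, 1, 0, 0, 0, 0, 0, 0, 0, 0, 0, 0;
     1, 0, 0, 0, 0, 0, 0, 0, 0, 0, 0, 0;
     0, 0, 0, 1, 0, 0, 0, 0, 0, 0, 0, 0;
     0, 0, 1, 0, 0, 0, 0, 0, 0, 0, 0, 0;
     0, 0, 0, 0, -2, 0, 0, 0, 0, 0, 0, 0;
     0, 0, 0, 0, 0, -2, 0, 0, 0, 0, 0, 0;
     0, 0, 0, 0, 0, 0, -2, 0, 0, 0, 0, 0;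
     0, 0, 0, 0, 0, 0, 0, -2, 0, 0, 0, 0;
     0, 0, 0, 0, 0, 0, 0, 0, -2, 1, 0, 0;
     0, 0, 0, 0, 0, 0, 0, 0, 1, -2, 1, 1;
     0, 0, 0, 0, 0, 0, 0, 0, 0, 1, -2, 0;
     0, 0, 0, 0, 0, 0, 0, 0, 0, 1, 0, -2]

def Pmat : Matrix (Fin 12) (Fin 12) ℤ :=
  !![1, 0, 0, 0, 0, 0, 0, 0, 0, 0, 0, 0;
     0, 1, 0, 0, 0, 0, 0, 0, 0, 0, 0, 0;
     0, 0, -2, -2, 0, 0, -1, -1, -2, -1, 0, 1;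
     0, 0, -2, -2, 0, 0, -1, -1, -2, -1, 1, 0;
     0, 0, 0, 0, 1, 0, 0, 0, 0, 0, 0, 0;
     0, 0, 0, 0, 0, 1, 0, 0, 0, 0, 0, 0;
     0, 0, -2, -1, 0, 0, -1, -1, -2, 0, 0, 0;
     0, 0, -2, -1, 0, 0, -2, 0, -2, 0, 0, 0;
     0, 0, -1, 0, 0, 0, -1, 1, -1, 1, -1, -1;
     0, 0, -2, -1, 0, 0, -2, 0, -1, 0, -1, -1;
     0, 0, -2, -1, 0, 0, -1, 0, -1, -1, 0, 0;
     0, 0, 1, 2, 0, 0, 0, 1, 2, 1, -1, -1]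

def Qmat : Matrix (Fin 12) (Fin 12) ℤ :=
  !![1, 0, 0, 0, 0, 0, 0, 0, 0, 0, 0, 0;
     0, 1, 0, 0, 0, 0, 0, 0, 0, 0, 0, 0;
     0, 0, -4, -4, 0, 0, 1, 1, -2, 3, 1, -5;
     0, 0, -4, -4, 0, 0, 2, 1, -2, 2, 2, -4;
     0, 0, 0, 0, 1, 0, 0, 0, 0, 0, 0, 0;
     0, 0, 0, 0, 0, 1, 0, 0, 0, 0, 0, 0;
     0, 0, 1, 1, 0, 0, 0, -1, 1, -1, 0, 1;
     0, 0, 1, 1, 0, 0, -1, 0, 1, -1, 0, 1;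
     0, 0, 5, 5, 0, 0, -2, -1, 2, -3, -2, 6;
     0, 0, 6, 6, 0, 0, -2, -1, 3, -4, -3, 7;
     0, 0, 2, 3, 0, 0, -1, 0, 1, -2, -1, 3;
     0, 0, 3, 2, 0, 0, -1, 0, 1, -2, -1, 3]

lemma PQ_eq_one : Pmat * Qmat = 1 := by
  ext i j
  fin_cases i <;> fin_cases j <;> decide

lemma Pmat_det : IsUnit Pmat.det :=
  Matrix.isUnit_det_of_right_inverse PQ_eq_one

/-- Section 3.7 of the paper: the lattices `U ⊥ U(2) ⊥ A₁² ⊥ D₆` and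
`U ⊥ U ⊥ A₁⁴ ⊥ D₄` are isometric. -/
theorem T_isometric :
    ∃ P : Matrix (Fin 12) (Fin 12) ℤ, (P.det = 1 ∨ P.det = -1) ∧
      Pᵀ * gramUU2A1A1D6 * P = gramUUA1A1A1A1D4 := by
  refine ⟨Pmat, Int.isUnit_iff.mp Pmat_det, ?_⟩
  ext i j
  fin_cases i <;> fin_cases j <;> decide
end

section
/- Let e_0,…,e_9 denote the standard basis of ℤ^10, let h = e_0 + e_9, and set a_4 = e_9 − 2e_1 − e_2 − e_3 − e_4 and b_4 = e_9 − 2e_5 − e_6 − e_7 − e_8. If v ∈ ℤ^10 satisfies vᵀ G_M v = −2 and vᵀ G_M h = 0, then v belongs to the set {±e_0, ±e_2, ±e_3, ±e_4, ±a_4, ±e_6, ±e_7, ±e_8, ±b_4}. -/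
open Matrix

lemma sqz_aux {a : ℤ} (h : a ^ 2 ≤ 0) : a = 0 :=
  (pow_eq_zero_iff two_ne_zero).mp (le_antisymm h (sq_nonneg a))

lemma one_le_sq_aux {a : ℤ} (h : a ≠ 0) : 1 ≤ a ^ 2 := by
  rcases h.lt_or_gt with h | h <;> nlinarith

lemma oddsq_aux (a s : ℤ) (hs : s % 2 = 1) : 1 ≤ (2 * a - s) ^ 2 :=
  one_le_sq_aux (by omega)

lemma tri_aux (a : ℤ) (h : a ^ 2 ≤ 1) : a = -1 ∨ a = 0 ∨ a = 1 := by
  have h1 : -1 ≤ a := by nlinarith [sq_nonneg (a + 1)]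
  have h2 : a ≤ 1 := by nlinarith [sq_nonneg (a - 1)]
  omega

lemma tri5_aux (a : ℤ) (h : a ^ 2 ≤ 4) :
    a = -2 ∨ a = -1 ∨ a = 0 ∨ a = 1 ∨ a = 2 := by
  have h1 : -2 ≤ a := by nlinarith [sq_nonneg (a + 2)]
  have h2 : a ≤ 2 := by nlinarith [sq_nonneg (a - 2)]
  omega

lemma main_aux (x0 x1 x2 x3 x4 x5 x6 x7 x8 x9 : ℤ)
    (L : x1 + (x5 + x9 * 2) = 0)
    (E : 4*x0^2 + x1^2 + (2*x2 - x1)^2 + (2*x3 - x1)^2 + (2*x4 - x1)^2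
       + x5^2 + (2*x6 - x5)^2 + (2*x7 - x5)^2 + (2*x8 - x5)^2 = 4) :
    ![x0,x1,x2,x3,x4,x5,x6,x7,x8,x9] = ![1, 0, 0, 0, 0, 0, 0, 0, 0, 0] ∨ ![x0,x1,x2,x3,x4,x5,x6,x7,x8,x9] = -![1, 0, 0, 0, 0, 0, 0, 0, 0, 0] ∨
    ![x0,x1,x2,x3,x4,x5,x6,x7,x8,x9] = ![0, 0, 1, 0, 0, 0, 0, 0, 0, 0] ∨ ![x0,x1,x2,x3,x4,x5,x6,x7,x8,x9] = -![0, 0, 1, 0, 0, 0, 0, 0, 0, 0] ∨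
    ![x0,x1,x2,x3,x4,x5,x6,x7,x8,x9] = ![0, 0, 0, 1, 0, 0, 0, 0, 0, 0] ∨ ![x0,x1,x2,x3,x4,x5,x6,x7,x8,x9] = -![0, 0, 0, 1, 0, 0, 0, 0, 0, 0] ∨
    ![x0,x1,x2,x3,x4,x5,x6,x7,x8,x9] = ![0, 0, 0, 0, 1, 0, 0, 0, 0, 0] ∨ ![x0,x1,x2,x3,x4,x5,x6,x7,x8,x9] = -![0, 0, 0, 0, 1, 0, 0, 0, 0, 0] ∨
    ![x0,x1,x2,x3,x4,x5,x6,x7,x8,x9] = ![0, -2, -1, -1, -1, 0, 0, 0, 0, 1] ∨ ![x0,x1,x2,x3,x4,x5,x6,x7,x8,x9] = -![0, -2, -1, -1, -1, 0, 0, 0, 0, 1] ∨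
    ![x0,x1,x2,x3,x4,x5,x6,x7,x8,x9] = ![0, 0, 0, 0, 0, 0, 1, 0, 0, 0] ∨ ![x0,x1,x2,x3,x4,x5,x6,x7,x8,x9] = -![0, 0, 0, 0, 0, 0, 1, 0, 0, 0] ∨
    ![x0,x1,x2,x3,x4,x5,x6,x7,x8,x9] = ![0, 0, 0, 0, 0, 0, 0, 1, 0, 0] ∨ ![x0,x1,x2,x3,x4,x5,x6,x7,x8,x9] = -![0, 0, 0, 0, 0, 0, 0, 1, 0, 0] ∨
    ![x0,x1,x2,x3,x4,x5,x6,x7,x8,x9] = ![0, 0, 0, 0, 0, 0, 0, 0, 1, 0] ∨ ![x0,x1,x2,x3,x4,x5,x6,x7,x8,x9] = -![0, 0, 0, 0, 0, 0, 0, 0, 1, 0] ∨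
    ![x0,x1,x2,x3,x4,x5,x6,x7,x8,x9] = ![0, 0, 0, 0, 0, -2, -1, -1, -1, 1] ∨ ![x0,x1,x2,x3,x4,x5,x6,x7,x8,x9] = -![0, 0, 0, 0, 0, -2, -1, -1, -1, 1] := by
  have n1 := sq_nonneg x1
  have n2 := sq_nonneg (2*x2 - x1)
  have n3 := sq_nonneg (2*x3 - x1)
  have n4 := sq_nonneg (2*x4 - x1)
  have n5 := sq_nonneg x5
  have n6 := sq_nonneg (2*x6 - x5)
  have n7 := sq_nonneg (2*x7 - x5)
  have n8 := sq_nonneg (2*x8 - x5)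
  have hb0 : x0 ^ 2 ≤ 1 := by linarith
  rcases tri_aux x0 hb0 with rfl | rfl | rfl
  · -- x0 = -1 : v = -e0
    have e1 : x1 = 0 := sqz_aux (by linarith); subst e1
    have e2 : 2*x2 - 0 = 0 := sqz_aux (by linarith)
    have e2' : x2 = 0 := by omega
    subst e2'
    have e3 : 2*x3 - 0 = 0 := sqz_aux (by linarith)
    have e3' : x3 = 0 := by omega
    subst e3'
    have e4 : 2*x4 - 0 = 0 := sqz_aux (by linarith)
    have e4' : x4 = 0 := by omega
    subst e4'
    have e5 : x5 = 0 := sqz_aux (by linarith); subst e5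
    have e6 : 2*x6 - 0 = 0 := sqz_aux (by linarith)
    have e6' : x6 = 0 := by omega
    subst e6'
    have e7 : 2*x7 - 0 = 0 := sqz_aux (by linarith)
    have e7' : x7 = 0 := by omega
    subst e7'
    have e8 : 2*x8 - 0 = 0 := sqz_aux (by linarith)
    have e8' : x8 = 0 := by omega
    subst e8'
    have e9 : x9 = 0 := by omega
    subst e9
    decide
  · -- x0 = 0
    have hb1 : x1 ^ 2 ≤ 4 := by linarith
    rcases tri5_aux x1 hb1 with rfl | rfl | rfl | rfl | rfl
    · -- x1 = -2 : v = a4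
      have e5 : x5 = 0 := sqz_aux (by linarith); subst e5
      have e2 : 2*x2 - -2 = 0 := sqz_aux (by linarith)
      have e2' : x2 = -1 := by omega
      subst e2'
      have e3 : 2*x3 - -2 = 0 := sqz_aux (by linarith)
      have e3' : x3 = -1 := by omega
      subst e3'
      have e4 : 2*x4 - -2 = 0 := sqz_aux (by linarith)
      have e4' : x4 = -1 := by omega
      subst e4'
      have e6 : 2*x6 - 0 = 0 := sqz_aux (by linarith)
      have e6' : x6 = 0 := by omega
      subst e6'
      have e7 : 2*x7 - 0 = 0 := sqz_aux (by linarith)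
      have e7' : x7 = 0 := by omega
      subst e7'
      have e8 : 2*x8 - 0 = 0 := sqz_aux (by linarith)
      have e8' : x8 = 0 := by omega
      subst e8'
      have e9 : x9 = 1 := by omega
      subst e9
      decide
    · -- x1 = -1 : contradiction via parity
      exfalso
      have h5 : x5 % 2 = 1 := by omega
      have o2 := oddsq_aux x2 (-1) (by norm_num)
      have o3 := oddsq_aux x3 (-1) (by norm_num)
      have o4 := oddsq_aux x4 (-1) (by norm_num)
      have o6 := oddsq_aux x6 x5 h5
      have o7 := oddsq_aux x7 x5 h5
      have o8 := oddsq_aux x8 x5 h5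
      have h5sq : 1 ≤ x5 ^ 2 := one_le_sq_aux (by omega)
      linarith
    · -- x1 = 0
      have hb5 : x5 ^ 2 ≤ 4 := by linarith
      rcases tri5_aux x5 hb5 with rfl | rfl | rfl | rfl | rfl
      · -- x5 = -2 : v = b4
        have e2 : 2*x2 - 0 = 0 := sqz_aux (by linarith)
        have e2' : x2 = 0 := by omega
        subst e2'
        have e3 : 2*x3 - 0 = 0 := sqz_aux (by linarith)
        have e3' : x3 = 0 := by omega
        subst e3'
        have e4 : 2*x4 - 0 = 0 := sqz_aux (by linarith)
        have e4' : x4 = 0 := by omega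
        subst e4'
        have e6 : 2*x6 - -2 = 0 := sqz_aux (by linarith)
        have e6' : x6 = -1 := by omega
        subst e6'
        have e7 : 2*x7 - -2 = 0 := sqz_aux (by linarith)
        have e7' : x7 = -1 := by omega
        subst e7'
        have e8 : 2*x8 - -2 = 0 := sqz_aux (by linarith)
        have e8' : x8 = -1 := by omega
        subst e8'
        have e9 : x9 = 1 := by omega
        subst e9
        decide
      · -- x5 = -1 : parity contradiction
        exfalso; omega
      · -- x5 = 0 : single ±1 among x2,x3,x4,x6,x7,x8
        have e9 : x9 = 0 := by omega
        subst e9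
        have S4 : 4*(x2^2 + x3^2 + x4^2 + x6^2 + x7^2 + x8^2) = 4 := by
          linear_combination E
        have S : x2^2 + x3^2 + x4^2 + x6^2 + x7^2 + x8^2 = 1 := by linarith
        have m2 := sq_nonneg x2
        have m3 := sq_nonneg x3
        have m4 := sq_nonneg x4
        have m6 := sq_nonneg x6
        have m7 := sq_nonneg x7
        have m8 := sq_nonneg x8
        rcases tri_aux x2 (by linarith) with rfl | rfl | rfl
        · have e3 : x3 = 0 := sqz_aux (by linarith); subst e3
          have e4 : x4 = 0 := sqz_aux (by linarith); subst e4
          have e6 : x6 = 0 := sqz_aux (by linarith); subst e6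
          have e7 : x7 = 0 := sqz_aux (by linarith); subst e7
          have e8 : x8 = 0 := sqz_aux (by linarith); subst e8
          decide
        · rcases tri_aux x3 (by linarith) with rfl | rfl | rfl
          · have e4 : x4 = 0 := sqz_aux (by linarith); subst e4
            have e6 : x6 = 0 := sqz_aux (by linarith); subst e6
            have e7 : x7 = 0 := sqz_aux (by linarith); subst e7
            have e8 : x8 = 0 := sqz_aux (by linarith); subst e8
            decide
          · rcases tri_aux x4 (by linarith) with rfl | rfl | rfl
            · have e6 : x6 = 0 := sqz_aux (by linarith); subst e6
              have e7 : x7 = 0 := sqz_aux (by linarith); subst e7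
              have e8 : x8 = 0 := sqz_aux (by linarith); subst e8
              decide
            · rcases tri_aux x6 (by linarith) with rfl | rfl | rfl
              · have e7 : x7 = 0 := sqz_aux (by linarith); subst e7
                have e8 : x8 = 0 := sqz_aux (by linarith); subst e8
                decide
              · rcases tri_aux x7 (by linarith) with rfl | rfl | rfl
                · have e8 : x8 = 0 := sqz_aux (by linarith); subst e8
                  decide
                · rcases tri_aux x8 (by linarith) with rfl | rfl | rfl
                  · decide
                  · exfalso; norm_num at S
                  · decide
                · have e8 : x8 = 0 := sqz_aux (by linarith); subst e8
                  decide
              · have e7 : x7 = 0 := sqz_aux (by linarith); subst e7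
                have e8 : x8 = 0 := sqz_aux (by linarith); subst e8
                decide
            · have e6 : x6 = 0 := sqz_aux (by linarith); subst e6
              have e7 : x7 = 0 := sqz_aux (by linarith); subst e7
              have e8 : x8 = 0 := sqz_aux (by linarith); subst e8
              decide
          · have e4 : x4 = 0 := sqz_aux (by linarith); subst e4
            have e6 : x6 = 0 := sqz_aux (by linarith); subst e6
            have e7 : x7 = 0 := sqz_aux (by linarith); subst e7
            have e8 : x8 = 0 := sqz_aux (by linarith); subst e8
            decide
        · have e3 : x3 = 0 := sqz_aux (by linarith); subst e3
          have e4 : x4 = 0 := sqz_aux (by linarith); subst e4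
          have e6 : x6 = 0 := sqz_aux (by linarith); subst e6
          have e7 : x7 = 0 := sqz_aux (by linarith); subst e7
          have e8 : x8 = 0 := sqz_aux (by linarith); subst e8
          decide
      · -- x5 = 1 : parity contradiction
        exfalso; omega
      · -- x5 = 2 : v = -b4
        have e2 : 2*x2 - 0 = 0 := sqz_aux (by linarith)
        have e2' : x2 = 0 := by omega
        subst e2'
        have e3 : 2*x3 - 0 = 0 := sqz_aux (by linarith)
        have e3' : x3 = 0 := by omega
        subst e3'
        have e4 : 2*x4 - 0 = 0 := sqz_aux (by linarith)
        have e4' : x4 = 0 := by omega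
        subst e4'
        have e6 : 2*x6 - 2 = 0 := sqz_aux (by linarith)
        have e6' : x6 = 1 := by omega
        subst e6'
        have e7 : 2*x7 - 2 = 0 := sqz_aux (by linarith)
        have e7' : x7 = 1 := by omega
        subst e7'
        have e8 : 2*x8 - 2 = 0 := sqz_aux (by linarith)
        have e8' : x8 = 1 := by omega
        subst e8'
        have e9 : x9 = -1 := by omega
        subst e9
        decide
    · -- x1 = 1 : contradiction via parity
      exfalso
      have h5 : x5 % 2 = 1 := by omega
      have o2 := oddsq_aux x2 1 (by norm_num)
      have o3 := oddsq_aux x3 1 (by norm_num)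
      have o4 := oddsq_aux x4 1 (by norm_num)
      have o6 := oddsq_aux x6 x5 h5
      have o7 := oddsq_aux x7 x5 h5
      have o8 := oddsq_aux x8 x5 h5
      have h5sq : 1 ≤ x5 ^ 2 := one_le_sq_aux (by omega)
      linarith
    · -- x1 = 2 : v = -a4
      have e5 : x5 = 0 := sqz_aux (by linarith); subst e5
      have e2 : 2*x2 - 2 = 0 := sqz_aux (by linarith)
      have e2' : x2 = 1 := by omega
      subst e2'
      have e3 : 2*x3 - 2 = 0 := sqz_aux (by linarith)
      have e3' : x3 = 1 := by omega
      subst e3'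
      have e4 : 2*x4 - 2 = 0 := sqz_aux (by linarith)
      have e4' : x4 = 1 := by omega
      subst e4'
      have e6 : 2*x6 - 0 = 0 := sqz_aux (by linarith)
      have e6' : x6 = 0 := by omega
      subst e6'
      have e7 : 2*x7 - 0 = 0 := sqz_aux (by linarith)
      have e7' : x7 = 0 := by omega
      subst e7'
      have e8 : 2*x8 - 0 = 0 := sqz_aux (by linarith)
      have e8' : x8 = 0 := by omega
      subst e8'
      have e9 : x9 = -1 := by omega
      subst e9
      decide
  · -- x0 = 1 : v = e0
    have e1 : x1 = 0 := sqz_aux (by linarith); subst e1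
    have e2 : 2*x2 - 0 = 0 := sqz_aux (by linarith)
    have e2' : x2 = 0 := by omega
    subst e2'
    have e3 : 2*x3 - 0 = 0 := sqz_aux (by linarith)
    have e3' : x3 = 0 := by omega
    subst e3'
    have e4 : 2*x4 - 0 = 0 := sqz_aux (by linarith)
    have e4' : x4 = 0 := by omega
    subst e4'
    have e5 : x5 = 0 := sqz_aux (by linarith); subst e5
    have e6 : 2*x6 - 0 = 0 := sqz_aux (by linarith)
    have e6' : x6 = 0 := by omega
    subst e6'
    have e7 : 2*x7 - 0 = 0 := sqz_aux (by linarith)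
    have e7' : x7 = 0 := by omega
    subst e7'
    have e8 : 2*x8 - 0 = 0 := sqz_aux (by linarith)
    have e8' : x8 = 0 := by omega
    subst e8'
    have e9 : x9 = 0 := by omega
    subst e9
    decide

/-- The claim in the proof of Proposition 3.9 of the paper:
`⟨h⟩⊥ ∩ Δ(M) = {±γ, ±α₁, …, ±α₄, ±β₁, …, ±β₄}`.  Here `h = e₀ + e₉ = γ + ξ`,
`α₄ = ξ − 2l₁' − α₁ − α₂ − α₃` and `β₄ = ξ − 2l₂' − β₁ − β₂ − β₃`. -/
theorem roots_orthogonal_to_h (v : Fin 10 → ℤ)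
    (hroot : v ⬝ᵥ G_M *ᵥ v = -2)
    (horth : v ⬝ᵥ G_M *ᵥ ![1, 0, 0, 0, 0, 0, 0, 0, 0, 1] = 0) :
    v = ![1, 0, 0, 0, 0, 0, 0, 0, 0, 0] ∨ v = -![1, 0, 0, 0, 0, 0, 0, 0, 0, 0] ∨
    v = ![0, 0, 1, 0, 0, 0, 0, 0, 0, 0] ∨ v = -![0, 0, 1, 0, 0, 0, 0, 0, 0, 0] ∨
    v = ![0, 0, 0, 1, 0, 0, 0, 0, 0, 0] ∨ v = -![0, 0, 0, 1, 0, 0, 0, 0, 0, 0] ∨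
    v = ![0, 0, 0, 0, 1, 0, 0, 0, 0, 0] ∨ v = -![0, 0, 0, 0, 1, 0, 0, 0, 0, 0] ∨
    v = ![0, -2, -1, -1, -1, 0, 0, 0, 0, 1] ∨ v = -![0, -2, -1, -1, -1, 0, 0, 0, 0, 1] ∨
    v = ![0, 0, 0, 0, 0, 0, 1, 0, 0, 0] ∨ v = -![0, 0, 0, 0, 0, 0, 1, 0, 0, 0] ∨
    v = ![0, 0, 0, 0, 0, 0, 0, 1, 0, 0] ∨ v = -![0, 0, 0, 0, 0, 0, 0, 1, 0, 0] ∨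
    v = ![0, 0, 0, 0, 0, 0, 0, 0, 1, 0] ∨ v = -![0, 0, 0, 0, 0, 0, 0, 0, 1, 0] ∨
    v = ![0, 0, 0, 0, 0, -2, -1, -1, -1, 1] ∨ v = -![0, 0, 0, 0, 0, -2, -1, -1, -1, 1] := by
  simp [G_M, mulVec, dotProduct, Fin.sum_univ_succ, Fin.succ] at hroot horth
  have E : 4*(v 0)^2 + (v 1)^2 + (2*(v 2) - v 1)^2 + (2*(v 3) - v 1)^2 + (2*(v 4) - v 1)^2
       + (v 5)^2 + (2*(v 6) - v 5)^2 + (2*(v 7) - v 5)^2 + (2*(v 8) - v 5)^2 = 4 := by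
    linear_combination (-2) * hroot + (4 * v 0) * horth
  have hv : v = ![v 0, v 1, v 2, v 3, v 4, v 5, v 6, v 7, v 8, v 9] := by
    funext i; fin_cases i <;> rfl
  rw [hv]
  exact main_aux (v 0) (v 1) (v 2) (v 3) (v 4) (v 5) (v 6) (v 7) (v 8) (v 9) horth E
end

section
/- Let e_0,…,e_9 denote the standard basis of ℤ^10, let h = e_0 + e_9, and let h' = 3h + e_1 + e_5. If v ∈ ℤ^10 satisfies vᵀ G_M v = −2 and vᵀ G_M h > 0, then vᵀ G_M h' > 0. -/
open Matrix

set_option maxHeartbeats 1000000 in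
/-- The key arithmetic step in the proof of Proposition 3.9 of the paper: every root
`v` of `M` (i.e. `vᵀ G_M v = −2`) pairing positively with `h = e₀ + e₉` also pairs
positively with `h' = 3h + e₁ + e₅`. -/
theorem root_positive_on_h' (v : Fin 10 → ℤ)
    (hroot : v ⬝ᵥ G_M *ᵥ v = -2)
    (hpos : 0 < v ⬝ᵥ G_M *ᵥ ![1, 0, 0, 0, 0, 0, 0, 0, 0, 1]) :
    0 < v ⬝ᵥ G_M *ᵥ ![3, 1, 0, 0, 0, 1, 0, 0, 0, 3] := by
  simp only [G_M, mulVec, dotProduct, Fin.sum_univ_succ, Fin.sum_univ_zero,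
    Matrix.cons_val_zero, Matrix.cons_val_one, Matrix.head_cons, Matrix.cons_val_succ,
    Matrix.of_apply, Fin.succ_zero_eq_one, add_zero] at hroot hpos ⊢
  set a := v 0 with ha; set b := v 1 with hb
  set c := v (Fin.succ 1) with hc
  set d := v (Fin.succ 1).succ with hd
  set e := v (Fin.succ 1).succ.succ with he
  set f := v (Fin.succ 1).succ.succ.succ with hf
  set g := v (Fin.succ 1).succ.succ.succ.succ with hg
  set h := v (Fin.succ 1).succ.succ.succ.succ.succ with hh
  set i := v (Fin.succ 1).succ.succ.succ.succ.succ.succ with hi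
  set j := v (Fin.succ 1).succ.succ.succ.succ.succ.succ.succ with hj
  nlinarith [sq_nonneg (4*a-c-d-e-g-h-i-4*j), sq_nonneg (3*c-d-e), sq_nonneg (2*d-e),
    sq_nonneg e, sq_nonneg (3*g-h-i), sq_nonneg (2*h-i), sq_nonneg i,
    sq_nonneg (2*a+b+c+d+e+f+g+h+i+6*j), sq_nonneg (-2*b+c+d+e+2*f-g-h-i),
    mul_pos hpos hpos, hpos, hroot]
end

section
/- The 10×10 block diagonal Gram matrices of U ⊥ D_4 ⊥ D_4 and of U(2) ⊥ D_8 are isometric: there exists a 10×10 integer matrix P with det P = ±1 such that Pᵀ A P = B, where A is the Gram matrix of U ⊥ D_4 ⊥ D_4 and B is the Gram matrix of U(2) ⊥ D_8. -/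
open Matrix

/-- The block diagonal Gram matrix of `U ⊥ D₄ ⊥ D₄` (root lattices negative definite;
`D₄` is the negative of the Cartan matrix of type `D₄`). -/
def gramUD4D4 : Matrix (Fin 10) (Fin 10) ℤ :=
  !![0, 1, 0, 0, 0, 0, 0, 0, 0, 0;
     1, 0, 0, 0, 0, 0, 0, 0, 0, 0;
     0, 0, -2, 1, 0, 0, 0, 0, 0, 0;
     0, 0, 1, -2, 1, 1, 0, 0, 0, 0;
     0, 0, 0, 1, -2, 0, 0, 0, 0, 0;
     0, 0, 0, 1, 0, -2, 0, 0, 0, 0;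
     0, 0, 0, 0, 0, 0, -2, 1, 0, 0;
     0, 0, 0, 0, 0, 0, 1, -2, 1, 1;
     0, 0, 0, 0, 0, 0, 0, 1, -2, 0;
     0, 0, 0, 0, 0, 0, 0, 1, 0, -2]

/-- The block diagonal Gram matrix of `U(2) ⊥ D₈`. -/
def gramU2D8 : Matrix (Fin 10) (Fin 10) ℤ :=
  !![0, 2, 0, 0, 0, 0, 0, 0, 0, 0;
     2, 0, 0, 0, 0, 0, 0, 0, 0, 0;
     0, 0, -2, 1, 0, 0, 0, 0, 0, 0;
     0, 0, 1, -2, 1, 0, 0, 0, 0, 0;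
     0, 0, 0, 1, -2, 1, 0, 0, 0, 0;
     0, 0, 0, 0, 1, -2, 1, 0, 0, 0;
     0, 0, 0, 0, 0, 1, -2, 1, 0, 0;
     0, 0, 0, 0, 0, 0, 1, -2, 1, 1;
     0, 0, 0, 0, 0, 0, 0, 1, -2, 0;
     0, 0, 0, 0, 0, 0, 0, 1, 0, -2]

/-- The change-of-basis matrix realizing the isometry. -/
def isomP : Matrix (Fin 10) (Fin 10) ℤ :=
  !![-10, -2, 1, -1, -1, -1, -1, 1, -1, 1;
     -10, -2, 1, -1, -1, -1, -1, 0, 1, 1;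
     5, 1, 0, 1, 0, 0, 1, 0, 0, -1;
     -2, 0, 0, 1, -1, -1, 1, 0, 0, 0;
     3, 1, -1, 1, 0, 0, 1, 0, 0, -1;
     0, 0, 0, 0, 0, -1, 1, 0, 0, 0;
     3, 1, 0, 0, 0, 1, 0, 0, 0, 0;
     -4, 0, 1, -1, 0, 0, -1, 1, 0, 0;
     -1, 0, 0, 0, 0, 0, -1, 1, 0, 0;
     2, 1, 0, 0, 1, 0, 0, 0, 0, 0]

/-- The inverse of `isomP`. -/
def isomQ : Matrix (Fin 10) (Fin 10) ℤ :=
  !![-1, -1, -1, 1, -1, 0, -1, 1, 0, -1;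
     -5, -5, -6, 6, -4, -1, -5, 6, -1, -4;
     2, 2, 3, -2, 1, 0, 2, -2, 0, 2;
     5, 5, 6, -5, 4, 0, 5, -6, 1, 5;
     7, 7, 8, -8, 6, 1, 7, -8, 1, 7;
     8, 8, 9, -9, 7, 1, 9, -9, 1, 7;
     8, 8, 9, -9, 7, 2, 9, -9, 1, 7;
     7, 7, 8, -8, 6, 2, 8, -8, 2, 6;
     3, 4, 4, -4, 3, 1, 4, -4, 1, 3;
     3, 3, 3, -3, 2, 1, 4, -4, 1, 3]

lemma det_pm_of_mul_eq_one {n : ℕ} (M1 M2 : Matrix (Fin n) (Fin n) ℤ)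
    (h : M1 * M2 = 1) : M1.det = 1 ∨ M1.det = -1 := by
  have hd : M1.det * M2.det = 1 := by rw [← Matrix.det_mul, h, Matrix.det_one]
  exact Int.isUnit_iff.mp (IsUnit.of_mul_eq_one _ hd)

set_option maxRecDepth 8000 in
lemma isomP_mul_isomQ : isomP * isomQ = 1 := by decide

set_option maxRecDepth 8000 in
lemma isomP_conj : isomPᵀ * gramUD4D4 * isomP = gramU2D8 := by decide

set_option maxRecDepth 8000 in
/-- Section 3.7 of the paper: the lattices `U ⊥ D₄ ⊥ D₄` and `U(2) ⊥ D₈`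
are isometric. -/
theorem UD4D4_isometric_U2D8 :
    ∃ P : Matrix (Fin 10) (Fin 10) ℤ, (P.det = 1 ∨ P.det = -1) ∧
      Pᵀ * gramUD4D4 * P = gramU2D8 := by
  exact ⟨isomP, det_pm_of_mul_eq_one isomP isomQ isomP_mul_isomQ, isomP_conj⟩
end
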